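/- For every integer L ≥ 2, every real C ≥ 1, every integer p ≥ 1, every J > 0 and every β ≥ 0, the non-linear model partition function satisfies the 'ordered' lower bound Z_Λ(β,J,p) ≥ (1/(πC√p))^{L²} · exp(2βJ·(1 − 1/C²)·L²). -/

import Mathlib

open MeasureTheory Real

/-- The site space: the discrete torus of side `L`. -/
abbrev Torus (L : ℕ) := ZMod L × ZMod L

/-- A configuration of the non-linear model: one spin in the circle `ℝ/2πℤ` per site. -/
abbrev NLConfig (L : ℕ) := Torus L → AddCircle (2 * Real.pi)

/-- The two unit coordinate vectors `e₁ = (1,0)` and `e₂ = (0,1)`. -/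
def coordVec (L : ℕ) : Fin 2 → Torus L
  | 0 => (1, 0)
  | 1 => (0, 1)

instance : Fact ((0 : ℝ) < 2 * Real.pi) := ⟨by positivity⟩

/-- The product of normalized Haar measures on the spins. -/
noncomputable def nlMeasure (L : ℕ) [NeZero L] : Measure (NLConfig L) :=
  Measure.pi fun _ => (AddCircle.haarAddCircle : Measure (AddCircle (2 * Real.pi)))

/-- The non-linear Hamiltonian
`H_{p,J}(φ) = −J·Σ_{bonds (x,y)} ((1 + cos(φ_x − φ_y))/2)^p`. -/
noncomputable def nlH (L : ℕ) [NeZero L] (p : ℕ) (J : ℝ) (φ : NLConfig L) : ℝ :=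
  -J * ∑ x : Torus L, ∑ i : Fin 2,
    ((1 + Real.Angle.cos (φ x - φ (x + coordVec L i))) / 2) ^ p

/-- The non-linear model partition function. -/
noncomputable def nlZ (L : ℕ) [NeZero L] (β J : ℝ) (p : ℕ) : ℝ :=
  ∫ φ, Real.exp (-β * nlH L p J φ) ∂(nlMeasure L)

/-!
Restrict the integral to the configurations with every spin in the closed arc of radius
`r = 1/(C√p)` around `0`; this set has measure `(r/π)^{L²}`. On it neighbouring spins differ by
at most `2r`, and `cos θ ≥ 1 - θ²/2` together with Bernoulli's inequality bounds each of the
`2L²` bond energies below by `1 - p r² = 1 - 1/C²`.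
-/

namespace Real.Angle

theorem norm_eq_abs_toReal (θ : Angle) : ‖θ‖ = |θ.toReal| := by
  conv_lhs => rw [← coe_toReal θ]
  refine (AddCircle.norm_coe_eq_abs_iff _ two_pi_pos.ne').2 ?_
  rw [abs_of_pos two_pi_pos]
  linarith [abs_toReal_le_pi θ]

theorem one_sub_sq_norm_div_four_le (θ : Angle) : 1 - ‖θ‖ ^ 2 / 4 ≤ (1 + cos θ) / 2 := by
  have h := one_sub_sq_div_two_le_cos (x := θ.toReal)
  rw [← cos_coe, coe_toReal, ← sq_abs, ← norm_eq_abs_toReal] at h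
  linarith

theorem one_sub_mul_sq_norm_div_four_le_pow (p : ℕ) (θ : Angle) :
    1 - p * ‖θ‖ ^ 2 / 4 ≤ ((1 + cos θ) / 2) ^ p := by
  have hlow := one_sub_sq_norm_div_four_le θ
  have hcos : -1 ≤ cos θ := by
    rw [← coe_toReal θ, cos_coe]; exact Real.neg_one_le_cos _
  calc 1 - p * ‖θ‖ ^ 2 / 4 ≤ 1 + p * ((1 + cos θ) / 2 - 1) := by nlinarith [p.cast_nonneg (α := ℝ)]
    _ ≤ (1 + ((1 + cos θ) / 2 - 1)) ^ p := one_add_mul_le_pow (by linarith) p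
    _ = ((1 + cos θ) / 2) ^ p := by ring_nf

end Real.Angle

theorem AddCircle.haarAddCircle_closedBall {T : ℝ} [Fact (0 < T)] (x : AddCircle T) (ε : ℝ) :
    haarAddCircle (Metric.closedBall x ε) = ENNReal.ofReal (min T (2 * ε) / T) := by
  have hT : (0 : ℝ) < T := Fact.out
  have h := volume_closedBall T (x := x) ε
  rw [volume_eq_smul_haarAddCircle, Measure.smul_apply, smul_eq_mul] at h
  rw [ENNReal.ofReal_div_of_pos hT, ← h, mul_comm,
    ENNReal.mul_div_cancel_right (by simpa using hT) ENNReal.ofReal_ne_top]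

instance (L : ℕ) [NeZero L] : IsProbabilityMeasure (nlMeasure L) := by
  unfold nlMeasure; infer_instance

theorem card_torus (L : ℕ) [NeZero L] : Fintype.card (Torus L) = L ^ 2 := by
  simp [Fintype.card_prod, ZMod.card, sq]

theorem nlMeasure_real_pi_closedBall (L : ℕ) [NeZero L] {r : ℝ} (hr₀ : 0 ≤ r) (hr : r ≤ π) :
    (nlMeasure L).real (Set.univ.pi fun _ => Metric.closedBall 0 r) = (r / π) ^ (L ^ 2) := by
  have h2r : min (2 * π) (2 * r) / (2 * π) = r / π := by
    rw [min_eq_right (by linarith)]; field_simp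
  rw [measureReal_def, nlMeasure, Measure.pi_pi]
  simp only [AddCircle.haarAddCircle_closedBall, h2r, Finset.prod_const, Finset.card_univ,
    card_torus, ENNReal.toReal_pow, ENNReal.toReal_ofReal (by positivity : 0 ≤ r / π)]

theorem continuous_nlH (L : ℕ) [NeZero L] (p : ℕ) (J : ℝ) : Continuous (nlH L p J) := by
  have := Real.Angle.continuous_cos
  unfold nlH
  fun_prop

theorem nlH_le_of_le_bond {L : ℕ} [NeZero L] {p : ℕ} {J : ℝ} (hJ : 0 ≤ J) {e : ℝ} {φ : NLConfig L}
    (h : ∀ x i, e ≤ ((1 + Real.Angle.cos (φ x - φ (x + coordVec L i))) / 2) ^ p) :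
    nlH L p J φ ≤ -(2 * J * e * L ^ 2) := by
  have hsum : ∑ _x : Torus L, ∑ _i : Fin 2, e ≤
      ∑ x : Torus L, ∑ i : Fin 2, ((1 + Real.Angle.cos (φ x - φ (x + coordVec L i))) / 2) ^ p :=
    Finset.sum_le_sum fun x _ => Finset.sum_le_sum fun i _ => h x i
  simp only [Finset.sum_const, Finset.card_univ, card_torus, Fintype.card_fin, nsmul_eq_mul] at hsum
  unfold nlH
  push_cast at hsum
  nlinarith

theorem one_sub_mul_sq_le_bond {L : ℕ} (p : ℕ) {r : ℝ} {φ : NLConfig L}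
    (hφ : φ ∈ Set.univ.pi fun _ => Metric.closedBall 0 r) (x y : Torus L) :
    1 - p * r ^ 2 ≤ ((1 + Real.Angle.cos (φ x - φ y)) / 2) ^ p := by
  have hx : ‖φ x‖ ≤ r := mem_closedBall_zero_iff.1 (hφ x trivial)
  have hy : ‖φ y‖ ≤ r := mem_closedBall_zero_iff.1 (hφ y trivial)
  have hxy : ‖φ x - φ y‖ ≤ 2 * r := (norm_sub_le _ _).trans (by linarith)
  have hsq : ‖φ x - φ y‖ ^ 2 ≤ (2 * r) ^ 2 := pow_le_pow_left₀ (norm_nonneg _) hxy 2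
  have h : 1 - p * ‖φ x - φ y‖ ^ 2 / 4 ≤ ((1 + Real.Angle.cos (φ x - φ y)) / 2) ^ p :=
    Real.Angle.one_sub_mul_sq_norm_div_four_le_pow p (φ x - φ y)
  nlinarith [mul_le_mul_of_nonneg_left hsq p.cast_nonneg]

theorem integrable_exp_neg_mul_nlH (L : ℕ) [NeZero L] (β J : ℝ) (p : ℕ) :
    Integrable (fun φ => exp (-β * nlH L p J φ)) (nlMeasure L) :=
  (continuous_exp.comp ((continuous_nlH L p J).const_mul (-β))).integrable_of_hasCompactSupport
    (HasCompactSupport.of_compactSpace _)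

/-- the 'ordered' lower bound on the non-linear model partition
function: `Z_Λ(β,J,p) ≥ (1/(πC√p))^{L²}·exp(2βJ(1 − 1/C²)L²)`. -/
theorem nl_ordered_lower_bound (L : ℕ) (hL : 2 ≤ L) (C : ℝ) (hC : 1 ≤ C)
    (p : ℕ) (hp : 1 ≤ p) (J : ℝ) (hJ : 0 < J) (β : ℝ) (hβ : 0 ≤ β) :
    haveI : NeZero L := ⟨by omega⟩
    nlZ L β J p ≥
      (1 / (Real.pi * C * Real.sqrt p)) ^ (L ^ 2) *
        Real.exp (2 * β * J * (1 - 1 / C ^ 2) * L ^ 2) := by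
  have : NeZero L := ⟨by omega⟩
  have hsqrt_p : 1 ≤ √(p : ℝ) := Real.one_le_sqrt.2 (by exact_mod_cast hp)
  set r := 1 / (C * √(p : ℝ))
  have hr₀ : 0 ≤ r := by positivity
  have hr : r ≤ π :=
    ((div_le_one (by positivity)).2 (by nlinarith)).trans (by linarith [pi_gt_three])
  have hpr : p * r ^ 2 = 1 / C ^ 2 := by
    rw [div_pow, mul_pow, sq_sqrt (by positivity)]; field_simp
  set S := Set.univ.pi fun _ : Torus L => Metric.closedBall (0 : AddCircle (2 * π)) r
  have hS : MeasurableSet S := MeasurableSet.univ_pi fun _ => measurableSet_closedBall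
  have hexp : ∀ φ ∈ S, exp (2 * β * J * (1 - 1 / C ^ 2) * L ^ 2) ≤ exp (-β * nlH L p J φ) := by
    intro φ hφ
    have hH := nlH_le_of_le_bond hJ.le fun x i => hpr ▸ one_sub_mul_sq_le_bond p hφ x _
    exact exp_le_exp.2 (by nlinarith)
  have hint := integrable_exp_neg_mul_nlH L β J p
  calc (1 / (π * C * √(p : ℝ))) ^ (L ^ 2) * exp (2 * β * J * (1 - 1 / C ^ 2) * L ^ 2)
      = exp (2 * β * J * (1 - 1 / C ^ 2) * L ^ 2) * (nlMeasure L).real S := by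
        rw [nlMeasure_real_pi_closedBall L hr₀ hr, mul_comm]; congr 2; simp only [r]; field_simp
    _ ≤ ∫ φ in S, exp (-β * nlH L p J φ) ∂nlMeasure L :=
        setIntegral_ge_of_const_le_real hS (measure_ne_top _ _) hexp hint.integrableOn
    _ ≤ nlZ L β J p := setIntegral_le_integral hint (ae_of_all _ fun _ => (exp_pos _).le)
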